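/- arXiv:1512.05152 — 3 statements merged into one kernel-verified Lean document; each statement's English description precedes it below -/
import Mathlib

section
/- Let Π be a 2-dimensional affine plane in ℝ³, and let e₁, e₂ be two line segments, each having exactly one endpoint on Π, which intersect at a common point p not on Π. Let δ be the distance between their endpoints x₁, x₂ on Π. Then at least one of the segments eᵢ makes an angle with the normal vector of Π (pointing toward the half-space containing the segments) that is strictly greater than δ/(2·ℓ(eᵢ)), where ℓ denotes the length of the segment. -/
open InnerProductGeometry

private lemma horiz_norm (n v : EuclideanSpace ℝ (Fin 3)) (hn : ‖n‖ = 1) :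
    ‖v - (inner ℝ v n : ℝ) • n‖ = Real.sin (angle v n) * ‖v‖ := by
  have hnn : (inner ℝ n n : ℝ) = 1 := by
    rw [real_inner_self_eq_norm_mul_norm, hn, mul_one]
  have h1 := sin_angle_mul_norm_mul_norm v n
  rw [hn, mul_one, hnn, mul_one] at h1
  have h2 : ‖v - (inner ℝ v n : ℝ) • n‖ ^ 2 =
      (inner ℝ v v : ℝ) - (inner ℝ v n : ℝ) * (inner ℝ v n : ℝ) := by
    rw [norm_sub_sq_real]
    rw [real_inner_smul_right, norm_smul, Real.norm_eq_abs, hn, mul_one]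
    rw [← real_inner_self_eq_norm_sq v]
    rw [sq_abs]
    ring
  rw [← Real.sqrt_sq (norm_nonneg (v - (inner ℝ v n : ℝ) • n)), h2, ← h1]

/-- Two segments from points `x₁, x₂` of a plane `Π ⊂ ℝ³`
(the plane `{x | ⟪x, n⟫ = c}` with unit normal `n`) meeting at a common point `p`
off the plane (on the side the normal points to): at least one of them makes an
angle with the normal greater than `δ / (2 ℓ(eᵢ))`, where `δ = dist x₁ x₂`. -/
theorem segments_angle_lower_bound
    (n : EuclideanSpace ℝ (Fin 3)) (hn : ‖n‖ = 1) (c : ℝ)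
    (x₁ x₂ p : EuclideanSpace ℝ (Fin 3))
    (hx₁ : inner ℝ x₁ n = (c : ℝ)) (hx₂ : inner ℝ x₂ n = (c : ℝ))
    (hp : c < (inner ℝ p n : ℝ))
    (hδ : x₁ ≠ x₂) :
    dist x₁ x₂ / (2 * dist x₁ p) < angle (p - x₁) n ∨
    dist x₁ x₂ / (2 * dist x₂ p) < angle (p - x₂) n := by
  set v₁ := p - x₁ with hv₁
  set v₂ := p - x₂ with hv₂
  set h : ℝ := (inner ℝ p n : ℝ) - c with hh
  have hhpos : 0 < h := sub_pos.2 hp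
  have hin₁ : (inner ℝ v₁ n : ℝ) = h := by
    rw [hv₁, inner_sub_left, hx₁, hh]
  have hin₂ : (inner ℝ v₂ n : ℝ) = h := by
    rw [hv₂, inner_sub_left, hx₂, hh]
  have hv₁ne : v₁ ≠ 0 := by
    intro h0; rw [h0, inner_zero_left] at hin₁; linarith
  have hv₂ne : v₂ ≠ 0 := by
    intro h0; rw [h0, inner_zero_left] at hin₂; linarith
  set ℓ₁ : ℝ := ‖v₁‖ with hℓ₁
  set ℓ₂ : ℝ := ‖v₂‖ with hℓ₂
  have hℓ₁pos : 0 < ℓ₁ := norm_pos_iff.2 hv₁ne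
  have hℓ₂pos : 0 < ℓ₂ := norm_pos_iff.2 hv₂ne
  have hd₁ : dist x₁ p = ℓ₁ := by rw [dist_eq_norm, hℓ₁, hv₁, norm_sub_rev]
  have hd₂ : dist x₂ p = ℓ₂ := by rw [dist_eq_norm, hℓ₂, hv₂, norm_sub_rev]
  set θ₁ := angle v₁ n with hθ₁
  set θ₂ := angle v₂ n with hθ₂
  have hθ₁nn : 0 ≤ θ₁ := angle_nonneg _ _
  have hθ₂nn : 0 ≤ θ₂ := angle_nonneg _ _
  set δ := dist x₁ x₂ with hδdef
  have hδpos : 0 < δ := dist_pos.2 hδ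
  -- key inequality: δ ≤ ℓ₁ sin θ₁ + ℓ₂ sin θ₂
  have hkey : δ ≤ Real.sin θ₁ * ℓ₁ + Real.sin θ₂ * ℓ₂ := by
    have e1 : ‖v₁ - h • n‖ = Real.sin θ₁ * ℓ₁ := by
      rw [← hin₁]; exact horiz_norm n v₁ hn
    have e2 : ‖v₂ - h • n‖ = Real.sin θ₂ * ℓ₂ := by
      rw [← hin₂]; exact horiz_norm n v₂ hn
    have hsum : x₁ - x₂ = (v₂ - h • n) - (v₁ - h • n) := by
      rw [hv₁, hv₂]; abel
    calc δ = ‖x₁ - x₂‖ := dist_eq_norm _ _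
      _ = ‖(v₂ - h • n) - (v₁ - h • n)‖ := by rw [hsum]
      _ ≤ ‖v₂ - h • n‖ + ‖v₁ - h • n‖ := norm_sub_le _ _
      _ = Real.sin θ₁ * ℓ₁ + Real.sin θ₂ * ℓ₂ := by rw [e1, e2]; ring
  have hs₁ : Real.sin θ₁ ≤ θ₁ := Real.sin_le hθ₁nn
  have hs₂ : Real.sin θ₂ ≤ θ₂ := Real.sin_le hθ₂nn
  -- strict version: δ < ℓ₁ θ₁ + ℓ₂ θ₂
  have hstrict : δ < θ₁ * ℓ₁ + θ₂ * ℓ₂ := by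
    rcases lt_or_eq_of_le hθ₁nn with hθ₁pos | hθ₁zero
    · have : Real.sin θ₁ < θ₁ := Real.sin_lt hθ₁pos
      have h1 : Real.sin θ₁ * ℓ₁ < θ₁ * ℓ₁ := by
        exact mul_lt_mul_of_pos_right this hℓ₁pos
      have h2 : Real.sin θ₂ * ℓ₂ ≤ θ₂ * ℓ₂ :=
        mul_le_mul_of_nonneg_right hs₂ (le_of_lt hℓ₂pos)
      linarith
    · -- θ₁ = 0, so sin θ₁ = 0; then δ ≤ sin θ₂ * ℓ₂ forces θ₂ > 0
      have hsin1 : Real.sin θ₁ = 0 := by rw [← hθ₁zero, Real.sin_zero]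
      have hδle : δ ≤ Real.sin θ₂ * ℓ₂ := by
        rw [hsin1] at hkey; linarith
      have hθ₂pos : 0 < θ₂ := by
        rcases lt_or_eq_of_le hθ₂nn with h' | h'
        · exact h'
        · exfalso
          rw [← h', Real.sin_zero] at hδle
          linarith
      have : Real.sin θ₂ < θ₂ := Real.sin_lt hθ₂pos
      have h2 : Real.sin θ₂ * ℓ₂ < θ₂ * ℓ₂ :=
        mul_lt_mul_of_pos_right this hℓ₂pos
      nlinarith
  by_contra hcon
  push_neg at hcon
  obtain ⟨h1, h2⟩ := hcon
  rw [hd₁] at h1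
  rw [hd₂] at h2
  have hb1 : θ₁ * (2 * ℓ₁) ≤ δ :=
    (le_div_iff₀ (by positivity)).mp h1
  have hb2 : θ₂ * (2 * ℓ₂) ≤ δ :=
    (le_div_iff₀ (by positivity)).mp h2
  linarith
end

section
/- Let α be the angle that a segment e₁ (from x₁ ∈ Π to p ∉ Π) makes with the unit normal n of the plane Π at x₁, and β the corresponding angle for a segment e₂ from x₂ ∈ Π to the same point p. Then ℓ(e₁)·α + ℓ(e₂)·β ≥ dist(x₁, x₂). -/
open InnerProductGeometry

lemma norm_sub_inner_smul_le_mul_angle {E : Type*} [NormedAddCommGroup E]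
    [InnerProductSpace ℝ E] (n v : E) (hn : ‖n‖ = 1) :
    ‖v - (inner ℝ v n : ℝ) • n‖ ≤ ‖v‖ * angle v n := by
  have h2 := sin_angle_mul_norm_mul_norm v n
  rw [hn, mul_one] at h2
  have hww : (inner ℝ (v - (inner ℝ v n : ℝ) • n) (v - (inner ℝ v n : ℝ) • n) : ℝ)
      = inner ℝ v v * inner ℝ n n - inner ℝ v n * inner ℝ v n := by
    simp only [inner_sub_left, inner_sub_right, real_inner_smul_left,
      real_inner_smul_right, real_inner_comm n v, real_inner_self_eq_norm_sq, hn]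
    rw [norm_smul, hn, mul_one, Real.norm_eq_abs, sq_abs]
    ring
  have h1 : ‖v - (inner ℝ v n : ℝ) • n‖ = Real.sin (angle v n) * ‖v‖ := by
    rw [norm_eq_sqrt_real_inner, hww, h2]
  rw [h1, mul_comm]
  exact mul_le_mul_of_nonneg_left (Real.sin_le (angle_nonneg v n)) (norm_nonneg v)

/-- For segments from `x₁, x₂ ∈ Π = {x | ⟪x,n⟫ = c}` to a common
point `p` off the plane on the side of the unit normal `n`, with `α, β` the angles
the segments make with `n`, one has `ℓ(e₁)·α + ℓ(e₂)·β ≥ dist(x₁, x₂)`. -/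
theorem length_mul_angle_sum_ge_dist
    (N : ℕ) (n : EuclideanSpace ℝ (Fin N)) (hn : ‖n‖ = 1) (c : ℝ)
    (x₁ x₂ p : EuclideanSpace ℝ (Fin N))
    (hx₁ : inner ℝ x₁ n = (c : ℝ)) (hx₂ : inner ℝ x₂ n = (c : ℝ))
    (hp : c < (inner ℝ p n : ℝ)) :
    dist x₁ x₂ ≤ dist x₁ p * angle (p - x₁) n + dist x₂ p * angle (p - x₂) n := by
  have ht₁ : (inner ℝ (p - x₁) n : ℝ) = inner ℝ p n - c := by
    rw [inner_sub_left, hx₁]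
  have ht₂ : (inner ℝ (p - x₂) n : ℝ) = inner ℝ p n - c := by
    rw [inner_sub_left, hx₂]
  have h₁ := norm_sub_inner_smul_le_mul_angle n (p - x₁) hn
  have h₂ := norm_sub_inner_smul_le_mul_angle n (p - x₂) hn
  rw [ht₁] at h₁
  rw [ht₂] at h₂
  have key : dist x₁ x₂ ≤ ‖(p - x₁) - ((inner ℝ p n : ℝ) - c) • n‖
      + ‖(p - x₂) - ((inner ℝ p n : ℝ) - c) • n‖ := by
    have : x₂ - x₁ = ((p - x₁) - ((inner ℝ p n : ℝ) - c) • n)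
        - ((p - x₂) - ((inner ℝ p n : ℝ) - c) • n) := by
      abel
    calc dist x₁ x₂ = ‖x₂ - x₁‖ := by rw [dist_eq_norm, norm_sub_rev]
    _ ≤ _ := by rw [this]; exact norm_sub_le _ _
  calc dist x₁ x₂ ≤ _ := key
  _ ≤ dist x₁ p * angle (p - x₁) n + dist x₂ p * angle (p - x₂) n := by
      rw [dist_eq_norm, norm_sub_rev x₁ p, dist_eq_norm, norm_sub_rev x₂ p]
      exact add_le_add h₁ h₂
end

section
/- Define the unary size of a presentation P = ⟨g₁,…,gₙ ; r₁,…,r_m⟩ as s(P) = n + Σⱼ |rⱼ|, where |rⱼ| is the word length of rⱼ with each letter counted once per occurrence (powers expanded). Define the binary size b(P) = n + Σⱼ b(rⱼ), where for rⱼ = (g'₁)^{k₁}⋯(g'_{s})^{k_s} (adjacent bases distinct) b(rⱼ) = Σₗ ⌈log₂ m_{g'ₗ}⌉ and m_g is the largest exponent of g or g⁻¹ occurring in any relator. Then any presentation P can be transformed into a presentation P' presenting an isomorphic group whose unary size satisfies s(P') = O(b(P)·log n), where n is the number of generators (assuming each m_g ≥ 2). -/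
/-- A relator in power form: a list of pairs (generator, exponent). -/
def PowerWord (n : ℕ) := List (Fin n × ℤ)

/-- The element of the free group represented by a power word. -/
def PowerWord.toFreeGroup {n : ℕ} (w : PowerWord n) : FreeGroup (Fin n) :=
  (w.map fun p => FreeGroup.of p.1 ^ p.2).prod

/-- The group presented by the power-form relators `rels`. -/
def presGroup {n m : ℕ} (rels : Fin m → PowerWord n) : Type :=
  PresentedGroup (Set.range fun j => (rels j).toFreeGroup)

noncomputable instance {n m : ℕ} (rels : Fin m → PowerWord n) : Group (presGroup rels) := by
  unfold presGroup; infer_instance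

/-- Unary size: number of generators plus total word length with powers expanded. -/
def unarySize {n m : ℕ} (rels : Fin m → PowerWord n) : ℕ :=
  n + ∑ j, ((rels j).map fun p => p.2.natAbs).sum

/-- `m_g`: the largest absolute exponent with which `g` occurs in the relators. -/
def maxExp {n m : ℕ} (rels : Fin m → PowerWord n) (g : Fin n) : ℕ :=
  Finset.univ.sup fun j =>
    ((rels j).map fun p => if p.1 = g then p.2.natAbs else 0).foldr max 0

/-- Binary size: `n` plus, for each letter `g^k` of a relator, `⌈log₂ m_g⌉`. -/
def binarySize {n m : ℕ} (rels : Fin m → PowerWord n) : ℕ :=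
  n + ∑ j, ((rels j).map fun p => Nat.clog 2 (maxExp rels p.1)).sum

def PowerWord.toList {n : ℕ} (w : PowerWord n) : List (Fin n × ℤ) := w

-- generic lemmas
def pwEval {α : Type*} (w : List (α × ℤ)) : FreeGroup α :=
  (w.map fun p => FreeGroup.of p.1 ^ p.2).prod
def wlen {α : Type*} (w : List (α × ℤ)) : ℕ := (w.map fun p => p.2.natAbs).sum

lemma pw_hom {α : Type*} {G : Type*} [Group G] (φ : FreeGroup α →* G) (w : List (α × ℤ)) :
    φ (pwEval w) = (w.map fun p => φ (FreeGroup.of p.1) ^ p.2).prod := by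
  rw [pwEval, map_list_prod, List.map_map]
  congr 1; ext p; simp [map_zpow]

lemma prod_zpow {G : Type*} [Group G] (x : G) (l : List ℤ) :
    (l.map (fun e => x ^ e)).prod = x ^ l.sum := by
  induction l with
  | nil => simp
  | cons a l ih => simp [ih, zpow_add]

lemma pw_hom_flatMap {α β : Type*} {G : Type*} [Group G] (φ : FreeGroup α →* G)
    (l : List β) (f : β → List (α × ℤ)) :
    φ (pwEval (l.flatMap f)) = (l.map fun b => φ (pwEval (f b))).prod := by
  induction l with
  | nil => simp [pwEval]
  | cons b l ih =>
      rw [List.flatMap_cons]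
      have : pwEval (f b ++ l.flatMap f) = pwEval (f b) * pwEval (l.flatMap f) := by
        simp [pwEval]
      rw [this, map_mul, ih, List.map_cons, List.prod_cons]

def bitz (k : ℤ) (t : ℕ) : ℤ := (if k.natAbs.testBit t then 1 else 0) * (if k < 0 then -1 else 1)

lemma bitz_natAbs_le (k : ℤ) (t : ℕ) : (bitz k t).natAbs ≤ 1 := by
  unfold bitz; split_ifs <;> simp

lemma bits_sum : ∀ (s a : ℕ), a < 2 ^ s →
    (∑ t ∈ Finset.range s, (if a.testBit t then 2 ^ t else 0)) = a := by
  intro s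
  induction s with
  | zero => intro a ha; interval_cases a; simp
  | succ s ih =>
      intro a ha
      rw [Finset.sum_range_succ']
      have h1 : ∀ t, a.testBit (t + 1) = (a / 2).testBit t := fun t => Nat.testBit_succ a t
      have h2 : (∑ t ∈ Finset.range s, (if a.testBit (t+1) then 2 ^ (t+1) else 0))
          = 2 * ∑ t ∈ Finset.range s, (if (a/2).testBit t then 2 ^ t else 0) := by
        rw [Finset.mul_sum]
        refine Finset.sum_congr rfl fun t _ => ?_
        rw [h1]; split_ifs <;> ring
      have h3 : a / 2 < 2 ^ s := by have := Nat.pow_succ 2 s; omega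
      rw [h2, ih _ h3]
      have h4 : a.testBit 0 = decide (a % 2 = 1) := Nat.testBit_zero a
      rcases Nat.mod_two_eq_zero_or_one a with h | h <;> simp [h4, h] <;> omega

lemma signed_bits (k : ℤ) (s : ℕ) (h : k.natAbs < 2 ^ (s+1)) :
    bitz k 0 + ∑ t ∈ Finset.range s, (2:ℤ) ^ (t+1) * bitz k (t+1) = k := by
  set ε : ℤ := if k < 0 then -1 else 1 with hε
  have step1 : bitz k 0 + ∑ t ∈ Finset.range s, (2:ℤ) ^ (t+1) * bitz k (t+1)
      = ∑ t ∈ Finset.range (s+1), (2:ℤ) ^ t * bitz k t := by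
    rw [Finset.sum_range_succ']; ring
  have step2 : ∑ t ∈ Finset.range (s+1), (2:ℤ) ^ t * bitz k t
      = (∑ t ∈ Finset.range (s+1), (2:ℤ) ^ t * (if k.natAbs.testBit t then 1 else 0)) * ε := by
    rw [Finset.sum_mul]
    refine Finset.sum_congr rfl fun t _ => ?_
    unfold bitz; rw [← hε]; ring
  have step3 : (∑ t ∈ Finset.range (s+1), (2:ℤ) ^ t * (if k.natAbs.testBit t then 1 else 0))
      = (k.natAbs : ℤ) := by
    have hb := bits_sum (s+1) k.natAbs h
    calc (∑ t ∈ Finset.range (s+1), (2:ℤ) ^ t * (if k.natAbs.testBit t then 1 else 0))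
        = ∑ t ∈ Finset.range (s+1), ((if k.natAbs.testBit t then 2 ^ t else 0 : ℕ) : ℤ) := by
          refine Finset.sum_congr rfl fun t _ => ?_
          split_ifs <;> push_cast <;> ring
      _ = ((∑ t ∈ Finset.range (s+1), (if k.natAbs.testBit t then 2 ^ t else 0) : ℕ) : ℤ) := by
          rw [Nat.cast_sum]
      _ = (k.natAbs : ℤ) := by rw [hb]
  rw [step1, step2, step3]
  rcases lt_or_ge k 0 with hk | hk
  · rw [hε, if_pos hk]; omega
  · rw [hε, if_neg (not_lt.mpr hk)]; omega

section Constr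
variable {n m : ℕ} (rels : Fin m → PowerWord n)

def nL (g : Fin n) : ℕ := Nat.log 2 (maxExp rels g)
abbrev Alt : Type := Fin n ⊕ (Σ g : Fin n, Fin (nL rels g))
instance : Fintype (Alt rels) := by unfold Alt; infer_instance

def letterW (g : Fin n) (k : ℤ) : List (Alt rels × ℤ) :=
  (Sum.inl g, bitz k 0) ::
    (List.finRange (nL rels g)).map fun i => (Sum.inr ⟨g, i⟩, bitz k ((i : ℕ) + 1))

def prevg (g : Fin n) (i : Fin (nL rels g)) : Alt rels :=
  if _ : (i : ℕ) = 0 then Sum.inl g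
  else Sum.inr ⟨g, ⟨(i : ℕ) - 1, lt_of_le_of_lt (Nat.pred_le _) i.2⟩⟩

def chainW (g : Fin n) (i : Fin (nL rels g)) : List (Alt rels × ℤ) :=
  [(Sum.inr ⟨g, i⟩, 1), (prevg rels g i, -2)]

def rwW (j : Fin m) : List (Alt rels × ℤ) :=
  (PowerWord.toList (rels j)).flatMap fun p => letterW rels p.1 p.2

def Ind : Type := Fin m ⊕ (Σ g : Fin n, Fin (nL rels g))
instance : Fintype (Ind rels) := by unfold Ind; infer_instance

def relsA : Ind rels → List (Alt rels × ℤ)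
  | .inl j => rwW rels j
  | .inr ⟨g, i⟩ => chainW rels g i

lemma letterW_val {G : Type*} [Group G] (φ : FreeGroup (Alt rels) →* G) (g : Fin n) (x : G)
    (hx : φ (FreeGroup.of (Sum.inl g)) = x)
    (hi : ∀ i : Fin (nL rels g), φ (FreeGroup.of (Sum.inr ⟨g, i⟩)) = x ^ ((2:ℤ) ^ ((i:ℕ)+1)))
    (k : ℤ) (hk : k.natAbs ≤ maxExp rels g) :
    φ (pwEval (letterW rels g k)) = x ^ k := by
  rw [pw_hom, letterW, List.map_cons, List.map_map, List.prod_cons, hx]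
  have h1 : (fun p : Alt rels × ℤ => φ (FreeGroup.of p.1) ^ p.2) ∘
      (fun i : Fin (nL rels g) => (Sum.inr ⟨g, i⟩, bitz k ((i:ℕ)+1)))
      = (fun e => x ^ e) ∘ (fun i : Fin (nL rels g) => (2:ℤ) ^ ((i:ℕ)+1) * bitz k ((i:ℕ)+1)) := by
    funext i
    simp only [Function.comp_apply, hi i, ← zpow_mul]
  rw [h1, ← List.map_map, prod_zpow, ← zpow_add]
  congr 1
  have hsum : ((List.finRange (nL rels g)).map
      (fun i : Fin (nL rels g) => (2:ℤ) ^ ((i:ℕ)+1) * bitz k ((i:ℕ)+1))).sum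
      = ∑ t ∈ Finset.range (nL rels g), (2:ℤ) ^ (t+1) * bitz k (t+1) := by
    rw [← Fin.sum_univ_def, Fin.sum_univ_eq_sum_range (fun t => (2:ℤ) ^ (t+1) * bitz k (t+1))]
  rw [hsum]
  exact signed_bits k _ (lt_of_le_of_lt hk (Nat.lt_pow_succ_log_self (by norm_num) _))

lemma chainW_val {G : Type*} [Group G] (φ : FreeGroup (Alt rels) →* G) (g : Fin n) (x : G)
    (hx : φ (FreeGroup.of (Sum.inl g)) = x)
    (hi : ∀ i : Fin (nL rels g), φ (FreeGroup.of (Sum.inr ⟨g, i⟩)) = x ^ ((2:ℤ) ^ ((i:ℕ)+1)))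
    (i : Fin (nL rels g)) :
    φ (pwEval (chainW rels g i)) = 1 := by
  have hprev : φ (FreeGroup.of (prevg rels g i)) = x ^ ((2:ℤ) ^ (i:ℕ)) := by
    unfold prevg
    split_ifs with h
    · rw [hx, h]; simp
    · rw [hi ⟨(i:ℕ)-1, _⟩]
      congr 1
      simp only []
      congr 1
      omega
  rw [pw_hom, chainW]
  simp only [List.map_cons, List.map_nil, List.prod_cons, List.prod_nil, mul_one]
  rw [hi i, hprev, ← zpow_mul, ← zpow_mul, ← zpow_add]
  convert zpow_zero x using 2
  have : ((2:ℤ) ^ ((i:ℕ)+1)) = 2 ^ (i:ℕ) * 2 := by ring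
  rw [this]; ring

end Constr
section MaxExp
variable {n m : ℕ} (rels : Fin m → PowerWord n)

lemma mem_le_foldr_max (l : List ℕ) (x : ℕ) (hx : x ∈ l) : x ≤ l.foldr max 0 := by
  induction l with
  | nil => simp at hx
  | cons a l ih =>
      rcases List.mem_cons.mp hx with rfl | h
      · exact le_max_left _ _
      · exact le_trans (ih h) (le_max_right _ _)

lemma foldr_max_pos (l : List ℕ) (h : 0 < l.foldr max 0) : ∃ x ∈ l, 0 < x := by
  induction l with
  | nil => simp at h
  | cons a l ih =>
      simp only [List.foldr_cons] at h
      rcases Nat.lt_or_ge 0 a with ha | ha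
      · exact ⟨a, List.mem_cons_self, ha⟩
      · have : 0 < l.foldr max 0 := by omega
        obtain ⟨x, hx, hx'⟩ := ih this
        exact ⟨x, List.mem_cons_of_mem _ hx, hx'⟩

lemma mem_natAbs_le_maxExp {j : Fin m} {p : Fin n × ℤ} (hp : p ∈ (PowerWord.toList (rels j))) :
    p.2.natAbs ≤ maxExp rels p.1 := by
  unfold maxExp
  refine le_trans ?_ (Finset.le_sup (Finset.mem_univ j))
  have : p.2.natAbs ∈ ((PowerWord.toList (rels j)).map
      fun q => if q.1 = p.1 then q.2.natAbs else 0) := by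
    refine List.mem_map.mpr ⟨p, hp, ?_⟩
    simp
  exact mem_le_foldr_max _ _ this

lemma exists_occ (g : Fin n) (hg : 0 < maxExp rels g) :
    ∃ j : Fin m, ∃ p ∈ (PowerWord.toList (rels j)), p.1 = g := by
  unfold maxExp at hg
  rw [Finset.lt_sup_iff] at hg
  obtain ⟨j, -, hj⟩ := hg
  obtain ⟨x, hx, hxpos⟩ := foldr_max_pos _ hj
  obtain ⟨p, hp, rfl⟩ := List.mem_map.mp hx
  refine ⟨j, p, hp, ?_⟩
  by_contra hne
  rw [if_neg hne] at hxpos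
  exact absurd hxpos (lt_irrefl 0)

end MaxExp
section Iso
variable {n m : ℕ} (rels : Fin m → PowerWord n)

/-- evaluation of new generators in the old free group -/
def evA : Alt rels → FreeGroup (Fin n)
  | .inl g => FreeGroup.of g
  | .inr ⟨g, i⟩ => FreeGroup.of g ^ ((2:ℤ) ^ ((i:ℕ) + 1))

/-- the induced map on free groups -/
def EA : FreeGroup (Alt rels) →* FreeGroup (Fin n) := FreeGroup.lift (evA rels)

@[simp] lemma EA_of (a : Alt rels) : EA rels (FreeGroup.of a) = evA rels a :=
  FreeGroup.lift_apply_of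

lemma toFreeGroup_eq_pwEval (w : PowerWord n) : w.toFreeGroup = pwEval (w.toList) := rfl

lemma EA_rwW (j : Fin m) : EA rels (pwEval (rwW rels j)) = (rels j).toFreeGroup := by
  rw [rwW, pw_hom_flatMap, toFreeGroup_eq_pwEval, pwEval]
  congr 1
  refine List.map_congr_left fun p hp => ?_
  exact letterW_val rels (EA rels) p.1 (FreeGroup.of p.1) (by simp [evA])
    (fun i => by simp [evA]) p.2 (mem_natAbs_le_maxExp rels hp)

lemma EA_chainW (g : Fin n) (i : Fin (nL rels g)) :
    EA rels (pwEval (chainW rels g i)) = 1 :=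
  chainW_val rels (EA rels) g (FreeGroup.of g) (by simp [evA]) (fun i => by simp [evA]) i

/-- relator sets -/
def Rold : Set (FreeGroup (Fin n)) := Set.range fun j => (rels j).toFreeGroup
def Rnew : Set (FreeGroup (Alt rels)) := Set.range fun ι => pwEval (relsA rels ι)

lemma lift_comp_eq {α : Type*} {G : Type*} [Group G] (ψ : FreeGroup α →* G) :
    FreeGroup.lift (fun a => ψ (FreeGroup.of a)) = ψ := by
  ext a
  simp

/-- forward: new presentation → old presentation -/
noncomputable def Φhom : PresentedGroup (Rnew rels) →* PresentedGroup (Rold rels) := by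
  refine PresentedGroup.toGroup (f := fun a => PresentedGroup.mk (Rold rels) (evA rels a)) ?_
  intro r hr
  obtain ⟨ι, rfl⟩ := hr
  have hlift : FreeGroup.lift (fun a => PresentedGroup.mk (Rold rels) (evA rels a))
      = (PresentedGroup.mk (Rold rels)).comp (EA rels) := by
    ext a
    simp [EA]
  rw [hlift]
  cases ι with
  | inl j =>
      simp only [relsA, MonoidHom.comp_apply, EA_rwW]
      exact (QuotientGroup.eq_one_iff _).mpr
        (Subgroup.subset_normalClosure ⟨j, rfl⟩)
  | inr gi =>
      obtain ⟨g, i⟩ := gi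
      simp only [relsA, MonoidHom.comp_apply, EA_chainW, map_one]

@[simp] lemma Φhom_of (a : Alt rels) :
    Φhom rels (PresentedGroup.of a) = PresentedGroup.mk (Rold rels) (evA rels a) :=
  PresentedGroup.toGroup.of _

/-- relators hold in the new presented group -/
lemma mk_rel_one (ι : Ind rels) : PresentedGroup.mk (Rnew rels) (pwEval (relsA rels ι)) = 1 :=
  (QuotientGroup.eq_one_iff _).mpr (Subgroup.subset_normalClosure ⟨ι, rfl⟩)

/-- the key doubling fact in the new presented group -/
lemma key_pow (g : Fin n) : ∀ (c : ℕ) (hc : c < nL rels g),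
    (PresentedGroup.mk (Rnew rels) (FreeGroup.of (Sum.inl g))) ^ ((2:ℤ) ^ (c+1))
      = PresentedGroup.mk (Rnew rels) (FreeGroup.of (Sum.inr ⟨g, ⟨c, hc⟩⟩)) := by
  have step : ∀ (i : Fin (nL rels g)),
      PresentedGroup.mk (Rnew rels) (FreeGroup.of (Sum.inr ⟨g, i⟩))
        = (PresentedGroup.mk (Rnew rels) (FreeGroup.of (prevg rels g i))) ^ (2:ℤ) := by
    intro i
    have h1 := mk_rel_one rels (Sum.inr ⟨g, i⟩)
    simp only [relsA, chainW, pwEval, List.map_cons, List.map_nil, List.prod_cons,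
      List.prod_nil, mul_one, map_mul, map_zpow] at h1
    have h2 : (PresentedGroup.mk (Rnew rels) (FreeGroup.of (Sum.inr ⟨g, i⟩))) ^ (1:ℤ) *
        (PresentedGroup.mk (Rnew rels) (FreeGroup.of (prevg rels g i))) ^ (-2:ℤ) = 1 := by
      exact_mod_cast h1
    rw [zpow_one] at h2
    have := mul_eq_one_iff_eq_inv.mp h2
    rw [this, ← zpow_neg]
    norm_num
  intro c
  induction c with
  | zero =>
      intro hc
      have := step ⟨0, hc⟩
      rw [this]
      have hprev : prevg rels g ⟨0, hc⟩ = Sum.inl g := by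
        unfold prevg; simp
      rw [hprev]
      norm_num
  | succ c ih =>
      intro hc
      have hc' : c < nL rels g := Nat.lt_of_succ_lt hc
      have := step ⟨c+1, hc⟩
      rw [this]
      have hprev : prevg rels g ⟨c+1, hc⟩ = Sum.inr ⟨g, ⟨c, hc'⟩⟩ := by
        unfold prevg
        simp
      rw [hprev, ← ih hc', ← zpow_mul]
      congr 1
  
/-- backward: old presentation → new presentation -/
noncomputable def Ψhom : PresentedGroup (Rold rels) →* PresentedGroup (Rnew rels) := by
  refine PresentedGroup.toGroup
    (f := fun g => PresentedGroup.mk (Rnew rels) (FreeGroup.of (Sum.inl g))) ?_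
  intro r hr
  obtain ⟨j, rfl⟩ := hr
  have hlift : FreeGroup.lift (fun g => PresentedGroup.mk (Rnew rels) (FreeGroup.of (Sum.inl g)))
      ((rels j).toFreeGroup)
      = ((PowerWord.toList (rels j)).map fun p =>
          (PresentedGroup.mk (Rnew rels) (FreeGroup.of (Sum.inl p.1))) ^ p.2).prod := by
    rw [toFreeGroup_eq_pwEval]
    rw [pw_hom (FreeGroup.lift _) _]
    congr 1
  rw [hlift]
  have hletter : ∀ p ∈ PowerWord.toList (rels j),
      (PresentedGroup.mk (Rnew rels) (FreeGroup.of (Sum.inl p.1))) ^ p.2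
        = PresentedGroup.mk (Rnew rels) (pwEval (letterW rels p.1 p.2)) := by
    intro p hp
    exact (letterW_val rels (PresentedGroup.mk (Rnew rels)) p.1 _ rfl
      (fun i => (key_pow rels p.1 i i.2).symm) p.2 (mem_natAbs_le_maxExp rels hp)).symm
  rw [List.map_congr_left hletter, ← pw_hom_flatMap]
  exact mk_rel_one rels (Sum.inl j)

@[simp] lemma Ψhom_of (g : Fin n) :
    Ψhom rels (PresentedGroup.of g) = PresentedGroup.mk (Rnew rels) (FreeGroup.of (Sum.inl g)) :=
  PresentedGroup.toGroup.of _

/-- the isomorphism between the two presented groups -/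
noncomputable def mainIso : PresentedGroup (Rnew rels) ≃* PresentedGroup (Rold rels) := by
  refine MonoidHom.toMulEquiv (Φhom rels) (Ψhom rels) ?_ ?_
  · ext a
    cases a with
    | inl g =>
        show (Ψhom rels) ((Φhom rels) (PresentedGroup.of (Sum.inl g)))
          = PresentedGroup.of (Sum.inl g)
        rw [Φhom_of]
        exact Ψhom_of rels g
    | inr gi =>
        obtain ⟨g, i⟩ := gi
        show Ψhom rels (Φhom rels (PresentedGroup.of (Sum.inr ⟨g, i⟩))) = PresentedGroup.of _
        rw [Φhom_of]
        have : PresentedGroup.mk (Rold rels) (evA rels (Sum.inr ⟨g, i⟩))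
            = (PresentedGroup.mk (Rold rels) (FreeGroup.of g)) ^ ((2:ℤ) ^ ((i:ℕ)+1)) := by
          simp [evA, map_zpow]
        rw [this, map_zpow]
        have : Ψhom rels (PresentedGroup.mk (Rold rels) (FreeGroup.of g))
            = PresentedGroup.mk (Rnew rels) (FreeGroup.of (Sum.inl g)) := Ψhom_of rels g
        rw [this, key_pow rels g i i.2]
        rfl
  · ext g
    show (Φhom rels) ((Ψhom rels) (PresentedGroup.of g)) = PresentedGroup.of g
    rw [Ψhom_of]
    exact Φhom_of rels (Sum.inl g)

end Iso
section Count
variable {n m : ℕ} (rels : Fin m → PowerWord n)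

lemma wlen_chainW (g : Fin n) (i : Fin (nL rels g)) : wlen (chainW rels g i) = 3 := by
  simp [wlen, chainW]

lemma wlen_letterW (g : Fin n) (k : ℤ) : wlen (letterW rels g k) ≤ 1 + nL rels g := by
  unfold wlen letterW
  rw [List.map_cons, List.sum_cons, List.map_map]
  have h1 : (bitz k 0).natAbs ≤ 1 := bitz_natAbs_le k 0
  have h2 : ((List.finRange (nL rels g)).map ((fun p : Alt rels × ℤ => p.2.natAbs) ∘
      (fun i : Fin (nL rels g) => (Sum.inr ⟨g, i⟩, bitz k ((i:ℕ)+1))))).sum ≤ nL rels g := by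
    have := List.sum_le_card_nsmul ((List.finRange (nL rels g)).map ((fun p : Alt rels × ℤ => p.2.natAbs) ∘
      (fun i : Fin (nL rels g) => (Sum.inr ⟨g, i⟩, bitz k ((i:ℕ)+1))))) 1 ?_
    · simpa using this
    · intro x hx
      obtain ⟨i, _, rfl⟩ := List.mem_map.mp hx
      exact bitz_natAbs_le k _
  omega

lemma wlen_flatMap {α β : Type*} (l : List β) (f : β → List (α × ℤ)) :
    wlen (l.flatMap f) = (l.map fun b => wlen (f b)).sum := by
  induction l with
  | nil => simp [wlen]
  | cons b l ih =>
      rw [List.flatMap_cons, List.map_cons, List.sum_cons, ← ih]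
      simp [wlen]

lemma wlen_rwW (j : Fin m) :
    wlen (rwW rels j) ≤ ((PowerWord.toList (rels j)).map fun p => 1 + nL rels p.1).sum := by
  rw [rwW, wlen_flatMap]
  exact List.sum_le_sum fun p _ => wlen_letterW rels p.1 p.2

/-- the per-relator binary cost dominates occurrences, summed per generator -/
lemma listsum_split (l : List (Fin n × ℤ)) (f : Fin n → ℕ) :
    (l.map fun p => f p.1).sum = ∑ g : Fin n, (l.map fun p => if p.1 = g then f g else 0).sum := by
  induction l with
  | nil => simp
  | cons p l ih =>
      rw [List.map_cons, List.sum_cons, ih]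
      have : ∀ g : Fin n, ((p :: l).map fun q => if q.1 = g then f g else 0).sum
          = (if p.1 = g then f g else 0) + (l.map fun q => if q.1 = g then f g else 0).sum := by
        intro g; rw [List.map_cons, List.sum_cons]
      rw [Finset.sum_congr rfl fun g _ => this g, Finset.sum_add_distrib]
      congr 1
      rw [Finset.sum_ite_eq Finset.univ p.1 f]
      simp

lemma fact1 (hM : ∀ g, 2 ≤ maxExp rels g) :
    (∑ g : Fin n, nL rels g)
      ≤ ∑ j, ((PowerWord.toList (rels j)).map fun p => Nat.clog 2 (maxExp rels p.1)).sum := by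
  have hswap : ∑ j, ((PowerWord.toList (rels j)).map fun p => Nat.clog 2 (maxExp rels p.1)).sum
      = ∑ g : Fin n, ∑ j, ((PowerWord.toList (rels j)).map
          fun p => if p.1 = g then Nat.clog 2 (maxExp rels g) else 0).sum := by
    rw [Finset.sum_congr rfl fun j _ => listsum_split (PowerWord.toList (rels j))
      (fun g => Nat.clog 2 (maxExp rels g))]
    rw [Finset.sum_comm]
  rw [hswap]
  refine Finset.sum_le_sum fun g _ => ?_
  obtain ⟨j, p, hp, hpg⟩ := exists_occ rels g (by have := hM g; omega)
  have hmem : Nat.clog 2 (maxExp rels g) ∈ ((PowerWord.toList (rels j)).map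
      fun q => if q.1 = g then Nat.clog 2 (maxExp rels g) else 0) :=
    List.mem_map.mpr ⟨p, hp, by rw [if_pos hpg]⟩
  have h1 : Nat.clog 2 (maxExp rels g) ≤ ((PowerWord.toList (rels j)).map
      fun q => if q.1 = g then Nat.clog 2 (maxExp rels g) else 0).sum :=
    List.le_sum_of_mem hmem
  have h2 : nL rels g ≤ Nat.clog 2 (maxExp rels g) := Nat.log_le_clog 2 _
  refine le_trans (le_trans h2 h1) ?_
  exact Finset.single_le_sum (f := fun j => ((PowerWord.toList (rels j)).map
      fun q => if q.1 = g then Nat.clog 2 (maxExp rels g) else 0).sum)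
    (fun _ _ => Nat.zero_le _) (Finset.mem_univ j)

end Count
section Final

lemma pwEval_relabel {α β : Type*} (e : α ≃ β) (w : List (α × ℤ)) :
    pwEval (w.map fun p => (e p.1, p.2)) = FreeGroup.freeGroupCongr e (pwEval w) := by
  rw [pwEval, pwEval, map_list_prod, List.map_map, List.map_map]
  refine congrArg List.prod (List.map_congr_left fun p _ => ?_)
  simp [map_zpow]

/-- presented groups over equal relator sets are isomorphic -/
def presEq {α : Type*} {S T : Set (FreeGroup α)} (h : S = T) :
    PresentedGroup S ≃* PresentedGroup T := by
  subst h; exact MulEquiv.refl _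

/-- Every presentation (with adjacent bases distinct in each
relator and each `m_g ≥ 2`, `n ≥ 2` generators) can be transformed into one
presenting an isomorphic group whose unary size is `O(b(P)·log n)`. -/
theorem small_presentation_exists :
    ∃ C : ℕ, 0 < C ∧
      ∀ (n m : ℕ), 2 ≤ n →
        ∀ rels : Fin m → PowerWord n,
          (∀ j, List.Chain' (fun a b => a.1 ≠ b.1) (rels j)) →
          (∀ g, 2 ≤ maxExp rels g) →
          ∃ (n' m' : ℕ) (rels' : Fin m' → PowerWord n'),
            Nonempty (presGroup rels' ≃* presGroup rels) ∧
            unarySize rels' ≤ C * (binarySize rels * Nat.clog 2 n) := by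
  refine ⟨6, by norm_num, ?_⟩
  intro n m hn rels _ hM
  classical
  set n' := Fintype.card (Alt rels) with hn'
  set m' := Fintype.card (Ind rels) with hm'
  set eα := Fintype.equivFin (Alt rels) with heα
  set eι := Fintype.equivFin (Ind rels) with heι
  set rels' : Fin m' → PowerWord n' :=
    (fun j => ((relsA rels (eι.symm j)).map fun p => (eα p.1, p.2) : List (Fin n' × ℤ)))
    with hrels'
  refine ⟨n', m', rels', ?_, ?_⟩
  · -- isomorphism
    have h1 : ∀ j, (rels' j).toFreeGroup
        = FreeGroup.freeGroupCongr eα (pwEval (relsA rels (eι.symm j))) := by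
      intro j
      rw [hrels']
      exact pwEval_relabel eα _
    have hset : (Set.range fun j => (rels' j).toFreeGroup)
        = FreeGroup.freeGroupCongr eα '' Rnew rels := by
      ext x
      constructor
      · rintro ⟨j, rfl⟩
        exact ⟨pwEval (relsA rels (eι.symm j)), ⟨_, rfl⟩, (h1 j).symm⟩
      · rintro ⟨y, ⟨ι, rfl⟩, rfl⟩
        refine ⟨eι ι, ?_⟩
        show (rels' (eι ι)).toFreeGroup = _
        rw [h1]
        simp
    exact ⟨((presEq hset).trans
      (PresentedGroup.equivPresentedGroup (Rnew rels) eα).symm).trans (mainIso rels)⟩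
  · -- size bound
    set T := ∑ g : Fin n, nL rels g with hT
    set S := ∑ j, ((PowerWord.toList (rels j)).map fun p => Nat.clog 2 (maxExp rels p.1)).sum
      with hS
    have h_bin : binarySize rels = n + S := rfl
    have h_un : unarySize rels' = n' + ∑ j, wlen (rels' j) := rfl
    have h_wlen : ∀ j, wlen (rels' j) = wlen (relsA rels (eι.symm j)) := by
      intro j
      rw [hrels']
      unfold wlen
      rw [List.map_map]
      rfl
    have h_card : n' = n + T := by
      rw [hn']
      unfold Alt
      rw [Fintype.card_sum, Fintype.card_sigma]
      simp [hT]
    have h_sum : ∑ j, wlen (rels' j)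
        = (∑ j : Fin m, wlen (rwW rels j)) + 3 * T := by
      rw [Finset.sum_congr rfl fun j _ => h_wlen j]
      rw [Equiv.sum_comp eι.symm (fun ι => wlen (relsA rels ι))]
      have : ∑ ι : Ind rels, wlen (relsA rels ι)
          = (∑ j : Fin m, wlen (relsA rels (Sum.inl j)))
            + ∑ x : (Σ g : Fin n, Fin (nL rels g)), wlen (relsA rels (Sum.inr x)) := by
        exact Fintype.sum_sum_type _
      rw [this]
      congr 1
      have : ∀ x : (Σ g : Fin n, Fin (nL rels g)),
          wlen (relsA rels (Sum.inr x)) = 3 := by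
        rintro ⟨g, i⟩
        exact wlen_chainW rels g i
      rw [Finset.sum_congr rfl fun x _ => this x]
      simp only [Finset.sum_const, Finset.card_univ, smul_eq_mul]
      rw [Fintype.card_sigma]
      simp [hT, Finset.sum_mul, mul_comm]
    have h_letter_clog : ∀ (p : Fin n × ℤ),
        1 + nL rels p.1 ≤ 2 * Nat.clog 2 (maxExp rels p.1) := by
      intro p
      have h1 : 0 < Nat.clog 2 (maxExp rels p.1) := Nat.clog_pos (by norm_num) (hM p.1)
      have h2 : nL rels p.1 ≤ Nat.clog 2 (maxExp rels p.1) := Nat.log_le_clog 2 _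
      omega
    have h_rw : (∑ j : Fin m, wlen (rwW rels j)) ≤ 2 * S := by
      rw [hS, Finset.mul_sum]
      refine Finset.sum_le_sum fun j _ => ?_
      refine le_trans (wlen_rwW rels j) ?_
      have : ((PowerWord.toList (rels j)).map fun p => 2 * Nat.clog 2 (maxExp rels p.1)).sum
          = 2 * ((PowerWord.toList (rels j)).map fun p => Nat.clog 2 (maxExp rels p.1)).sum := by
        induction (PowerWord.toList (rels j)) with
        | nil => simp
        | cons p l ih => simp [ih]; ring
      rw [← this]
      exact List.sum_le_sum fun p _ => h_letter_clog p
    have h_T : T ≤ S := fact1 rels hM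
    have h_clog : 1 ≤ Nat.clog 2 n := Nat.clog_pos (by norm_num) hn
    have h_step : binarySize rels ≤ binarySize rels * Nat.clog 2 n :=
      Nat.le_mul_of_pos_right _ (by omega)
    omega

end Final
end
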